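/- arXiv:1704.07403 — 4 statements merged into one kernel-verified Lean document; each statement's English description precedes it below -/
import Mathlib

section
/- For any prime p and any integer a with 0 < a < p, the product ∏_{k=1}^{a} (k - p) is congruent to a!·(1 - p·∑_{k=1}^{a} 1/k) modulo p², where the sum ∑ 1/k is interpreted via modular inverses of k modulo p². -/
/-! Modulo `p²` we have `p² = 0`, so in `∏ (k - p) = ∏ k · ∏ (1 - p k⁻¹)` every product of two or
more of the terms `p k⁻¹` vanishes, leaving `a! (1 - p ∑ k⁻¹)`. -/

namespace Finset

variable {ι R : Type*} [CommRing R]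

theorem prod_one_sub_mul_of_sq_eq_zero (s : Finset ι) (g : ι → R) {ε : R} (hε : ε ^ 2 = 0) :
    ∏ i ∈ s, (1 - ε * g i) = 1 - ε * ∑ i ∈ s, g i := by
  classical
  induction s using Finset.induction with
  | empty => simp
  | insert x s hx ih =>
    rw [prod_insert hx, sum_insert hx, ih]
    linear_combination g x * (∑ i ∈ s, g i) * hε

theorem prod_sub_of_sq_eq_zero (s : Finset ι) (f g : ι → R) {ε : R} (hε : ε ^ 2 = 0)
    (hfg : ∀ i ∈ s, f i * g i = 1) :
    ∏ i ∈ s, (f i - ε) = (∏ i ∈ s, f i) * (1 - ε * ∑ i ∈ s, g i) := by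
  have hfactor : ∀ i ∈ s, f i - ε = f i * (1 - ε * g i) := fun i hi => by
    linear_combination ε * hfg i hi
  rw [prod_congr rfl hfactor, prod_mul_distrib, prod_one_sub_mul_of_sq_eq_zero s g hε]

end Finset

theorem ZMod.natCast_self_sq_eq_zero (p : ℕ) : (p : ZMod (p ^ 2)) ^ 2 = 0 := by
  rw [← Nat.cast_pow, ZMod.natCast_self]

theorem stmt_2_general (p : ℕ) (hp : p.Prime) (a : ℕ) (hap : a < p) :
    (∏ k ∈ Finset.Icc 1 a, ((k : ZMod (p ^ 2)) - (p : ZMod (p ^ 2)))) =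
      (a.factorial : ZMod (p ^ 2)) *
        (1 - (p : ZMod (p ^ 2)) * ∑ k ∈ Finset.Icc 1 a, (k : ZMod (p ^ 2))⁻¹) := by
  have hunit : ∀ k ∈ Finset.Icc 1 a, (k : ZMod (p ^ 2)) * (k : ZMod (p ^ 2))⁻¹ = 1 := by
    intro k hk
    obtain ⟨hk1, hka⟩ := Finset.mem_Icc.mp hk
    have hcop : k.Coprime p := (Nat.coprime_of_lt_prime (by omega) (by omega) hp).symm
    exact ZMod.coe_mul_inv_eq_one k (hcop.pow_right 2)
  have hfact : ∏ k ∈ Finset.Icc 1 a, (k : ZMod (p ^ 2)) = a.factorial := by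
    rw [← Nat.cast_prod, ← Finset.Ico_add_one_right_eq_Icc, Finset.prod_Ico_id_eq_factorial]
  rw [Finset.prod_sub_of_sq_eq_zero _ _ _ (ZMod.natCast_self_sq_eq_zero p) hunit, hfact]

theorem stmt_2 (p : ℕ) (hp : p.Prime) (a : ℕ) (ha0 : 0 < a) (hap : a < p) :
    (∏ k ∈ Finset.Icc 1 a, ((k : ZMod (p ^ 2)) - (p : ZMod (p ^ 2)))) =
      (a.factorial : ZMod (p ^ 2)) *
        (1 - (p : ZMod (p ^ 2)) * ∑ k ∈ Finset.Icc 1 a, (k : ZMod (p ^ 2))⁻¹) :=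
  stmt_2_general p hp a hap
end

section
/- For any prime p and any integer s ≥ 2, the sum ∑_{k = p^s - p^{s-1} - 1}^{p^s - 1} C(k, p^s - p^{s-1} - 1) is congruent to p modulo p². -/
/-!
By the hockey-stick identity the sum is `C(p^s, p^(s-1)) = p * C(p^s - 1, p^(s-1) - 1)`, so it
suffices that `C(p^s - 1, p^(s-1) - 1) ≡ 1 (mod p)`. Since `p` divides `C(p^n, j)` for
`0 < j < p^n`, Pascal's rule gives `C(p^n - 1, k) ≡ (-1)^k (mod p)` for `k < p^n`, and
`(-1)^(p^m - 1) = 1` in `ZMod p` because `(-1)^(p^m) = -1` there.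
-/

namespace Nat

theorem sum_Icc_choose_sub_sub_one {n m : ℕ} (hmn : m < n) :
    ∑ k ∈ Finset.Icc (n - m - 1) (n - 1), k.choose (n - m - 1) = n.choose m := by
  rw [sum_Icc_choose, Nat.sub_add_cancel (by omega), Nat.sub_add_cancel (by omega),
    choose_symm hmn.le]

theorem choose_mul_self_eq_mul_choose (a : ℕ) {m : ℕ} (hm : 0 < m) :
    (a * m).choose m = a * (a * m - 1).choose (m - 1) := by
  rcases Nat.eq_zero_or_pos a with rfl | ha
  · simp [Nat.choose_eq_zero_of_lt hm]
  have h := add_one_mul_choose_eq (a * m - 1) (m - 1)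
  rw [Nat.sub_add_cancel (Nat.one_le_iff_ne_zero.2 (by positivity)), Nat.sub_add_cancel hm] at h
  exact Nat.eq_of_mul_eq_mul_right hm (by rw [← h]; ring)

end Nat

section

variable {p : ℕ} [hp : Fact p.Prime]

theorem ZMod.choose_prime_pow_sub_one {n k : ℕ} (hk : k < p ^ n) :
    ((p ^ n - 1).choose k : ZMod p) = (-1) ^ k := by
  induction k with
  | zero => simp
  | succ k ih =>
    have hpascal : (p ^ n - 1).choose k + (p ^ n - 1).choose (k + 1) = (p ^ n).choose (k + 1) := by
      rw [Nat.choose_succ_right (p ^ n) k (by omega)]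
    have hdvd : ((p ^ n).choose (k + 1) : ZMod p) = 0 :=
      (ZMod.natCast_eq_zero_iff _ _).2 (hp.out.dvd_choose_pow k.succ_ne_zero hk.ne)
    rw [← hpascal, Nat.cast_add, ih (by omega)] at hdvd
    rw [pow_succ, eq_neg_of_add_eq_zero_right hdvd]
    ring

theorem ZMod.choose_prime_pow_succ_sub_one (m : ℕ) :
    ((p ^ (m + 1) - 1).choose (p ^ m - 1) : ZMod p) = 1 := by
  have hpos : 0 < p ^ m := pow_pos hp.out.pos m
  have hlt : p ^ m - 1 < p ^ (m + 1) :=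
    (Nat.sub_le _ 1).trans_lt (Nat.pow_lt_pow_right hp.out.one_lt (Nat.lt_add_one m))
  rw [ZMod.choose_prime_pow_sub_one hlt]
  have h : (-1 : ZMod p) ^ (p ^ m - 1) * (-1) = -1 := by
    rw [← pow_succ, Nat.sub_add_cancel hpos, ZMod.pow_card_pow]
  simpa using congrArg Neg.neg h

end

theorem ZMod.natCast_mul_eq_self_of_natCast_eq_one {p c : ℕ} (hc : (c : ZMod p) = 1) :
    ((p * c : ℕ) : ZMod (p ^ 2)) = p := by
  rw [← Nat.cast_one, ZMod.natCast_eq_natCast_iff] at hc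
  rw [ZMod.natCast_eq_natCast_iff, sq]
  simpa using hc.mul_left' p

theorem stmt_9 (p : ℕ) (hp : p.Prime) (s : ℕ) (hs : 2 ≤ s) :
    ((∑ k ∈ Finset.Icc (p ^ s - p ^ (s - 1) - 1) (p ^ s - 1),
        k.choose (p ^ s - p ^ (s - 1) - 1) : ℕ) : ZMod (p ^ 2)) = (p : ZMod (p ^ 2)) := by
  have := Fact.mk hp
  obtain ⟨m, rfl⟩ : ∃ m, s = m + 1 := ⟨s - 1, by omega⟩
  have hpos : 0 < p ^ m := pow_pos hp.pos m
  have hps : p ^ (m + 1) = p * p ^ m := pow_succ' p m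
  have hlt : p ^ m < p ^ (m + 1) := Nat.pow_lt_pow_right hp.one_lt (Nat.lt_add_one m)
  rw [Nat.add_sub_cancel, Nat.sum_Icc_choose_sub_sub_one hlt, hps,
    Nat.choose_mul_self_eq_mul_choose p hpos, ← hps]
  exact ZMod.natCast_mul_eq_self_of_natCast_eq_one (ZMod.choose_prime_pow_succ_sub_one m)
end

section
/- Let p be a prime, s ≥ 1, and let j = p^s - p^{s-1} - 1 and n = p^s - 1. If k is an integer with j < k ≤ n - 1 whose base-p expansion has at least two digits differing from p-1 in positions 0 through s-2 (with top digit p-1), then C(k, j) ≡ 0 (mod p²). -/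
/-!
The base-`p` digits of `j = p ^ s - p ^ (s - 1) - 1` in positions `0, …, s - 2` all equal `p - 1`.
Hence whenever the digit of `k` in a position `t ≤ s - 2` is smaller than `p - 1`, the low `t + 1`
digits of `k` and `j` differ, so `k - j` is nonzero modulo `p ^ (t + 1)` and adding `j` and `k - j`
in base `p` carries out of position `t`. Two such positions give two carries, and Kummer's theorem
turns them into `p ^ 2 ∣ k.choose j`.
-/

namespace Nat

theorem mod_eq_sub_one_of_dvd_add_one {m n : ℕ} (h : m ∣ n + 1) : n % m = m - 1 := by
  obtain ⟨c | c, hc⟩ := h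
  · omega
  · have hm : m ≠ 0 := by rintro rfl; omega
    rw [mul_add_one] at hc
    rw [show n = m * c + (m - 1) by omega, mul_add_mod, mod_eq_of_lt (by omega)]

theorem div_pow_mod_eq_sub_one {p n t : ℕ} (hp : 0 < p) (h : n % p ^ (t + 1) = p ^ (t + 1) - 1) :
    n / p ^ t % p = p - 1 := by
  rw [← mod_mul_right_div_self, ← pow_succ, h, pow_succ]
  have hpt : 0 < p ^ t := pow_pos hp t
  refine Nat.div_eq_of_lt_le ?_ ?_
  · rw [mul_comm, mul_sub_one]; omega
  · rw [Nat.sub_add_cancel hp, mul_comm]; exact sub_lt (by positivity) one_pos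

theorem le_mod_add_sub_mod {m j k : ℕ} (hjk : j ≤ k) (hj : j % m = m - 1) (hk : k % m ≠ m - 1) :
    m ≤ j % m + (k - j) % m := by
  have hsplit : k % m = (j % m + (k - j) % m) % m := by
    rw [← add_mod, add_sub_of_le hjk]
  have : (k - j) % m ≠ 0 := fun h0 => hk (by rw [hsplit, h0, add_zero, mod_mod, hj])
  omega

theorem pow_sub_pow_pred_sub_one_mod_pow {p s i : ℕ} (hp : 1 < p) (hi : i < s) :
    (p ^ s - p ^ (s - 1) - 1) % p ^ i = p ^ i - 1 := by
  apply mod_eq_sub_one_of_dvd_add_one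
  rw [Nat.sub_add_cancel (Nat.sub_pos_of_lt (pow_lt_pow_right₀ hp (by omega)))]
  exact Nat.dvd_sub (pow_dvd_pow p (by omega)) (pow_dvd_pow p (by omega))

theorem Prime.card_le_emultiplicity_choose {p n k : ℕ} (hp : p.Prime) (hkn : k ≤ n) {S : Finset ℕ}
    (hS : ∀ i ∈ S, 1 ≤ i ∧ p ^ i ≤ k % p ^ i + (n - k) % p ^ i) :
    (S.card : ℕ∞) ≤ emultiplicity p (n.choose k) := by
  rw [hp.emultiplicity_choose hkn (lt_succ_self _)]
  refine Nat.cast_le.mpr (Finset.card_le_card fun i hi => ?_)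
  obtain ⟨hi1, hcarry⟩ := hS i hi
  have hpow : p ^ i ≤ n :=
    hcarry.trans (by have := mod_le k (p ^ i); have := mod_le (n - k) (p ^ i); omega)
  simp only [Finset.mem_filter, Finset.mem_Ico]
  exact ⟨⟨hi1, lt_succ_of_le (le_log_of_pow_le hp.one_lt hpow)⟩, hcarry⟩

end Nat

theorem stmt_11_general (p : ℕ) (hp : p.Prime) (s : ℕ) (k : ℕ)
    (hk1 : p ^ s - p ^ (s - 1) - 1 < k)
    (htwo : 2 ≤ ((Finset.range (s - 1)).filter (fun i => k / p ^ i % p < p - 1)).card) :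
    p ^ 2 ∣ k.choose (p ^ s - p ^ (s - 1) - 1) := by
  set j := p ^ s - p ^ (s - 1) - 1
  set T := (Finset.range (s - 1)).filter (fun i => k / p ^ i % p < p - 1)
  have hcarry : ∀ i ∈ T.map (addRightEmbedding 1),
      1 ≤ i ∧ p ^ i ≤ j % p ^ i + (k - j) % p ^ i := by
    simp only [Finset.mem_map, Finset.mem_filter, Finset.mem_range, addRightEmbedding_apply, T]
    rintro _ ⟨t, ⟨ht, hdigit⟩, rfl⟩
    refine ⟨Nat.le_add_left 1 t, Nat.le_mod_add_sub_mod hk1.le ?_ fun hk => ?_⟩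
    · exact Nat.pow_sub_pow_pred_sub_one_mod_pow hp.one_lt (by omega)
    · exact hdigit.ne (Nat.div_pow_mod_eq_sub_one hp.pos hk)
  have hmult : (2 : ℕ∞) ≤ emultiplicity p (k.choose j) := by
    have hcard := hp.card_le_emultiplicity_choose hk1.le hcarry
    rw [Finset.card_map] at hcard
    exact le_trans (by exact_mod_cast htwo) hcard
  exact pow_dvd_of_le_emultiplicity hmult

theorem stmt_11 (p : ℕ) (hp : p.Prime) (s : ℕ) (hs : 2 ≤ s) (k : ℕ)
    (hk1 : p ^ s - p ^ (s - 1) - 1 < k) (hk2 : k ≤ p ^ s - 2)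
    (htop : k / p ^ (s - 1) % p = p - 1)
    (htwo : 2 ≤ ((Finset.range (s - 1)).filter (fun i => k / p ^ i % p < p - 1)).card) :
    p ^ 2 ∣ k.choose (p ^ s - p ^ (s - 1) - 1) :=
  stmt_11_general p hp s k hk1 htwo
end

section
/- In the graded ring R = ℤ[t_1, ..., t_i]/(t_a² - t_a·t_{a-1} : a = 1, ..., i) with t_0 = 0, the identity (1 + t_i)·∏_{a=1}^{i} (1 - t_a + t_{a-1}) = 1 holds. -/
/-! Since `t_a² = t_a t_{a-1}`, each factor telescopes:
`(1 + t_a)(1 - t_a + t_{a-1}) = 1 + t_{a-1}`. Peeling off the factors from `a = i` down to `a = 1`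
leaves `1 + t_0 = 1`. -/

theorem one_add_last_mul_prod_one_sub_succ_add_castSucc {R : Type*} [CommRing R] :
    ∀ {n : ℕ} (t : Fin (n + 1) → R), t 0 = 0 →
      (∀ a : Fin n, t a.succ * t a.succ = t a.succ * t a.castSucc) →
      (1 + t (Fin.last n)) * ∏ a : Fin n, (1 - t a.succ + t a.castSucc) = 1
  | 0, t, h0, _ => by simp [Fin.last_zero, h0]
  | n + 1, t, h0, hrel => by
    have ih := one_add_last_mul_prod_one_sub_succ_add_castSucc (t ∘ Fin.castSucc) h0
      fun a => by simpa only [Function.comp_apply, Fin.succ_castSucc] using hrel a.castSucc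
    have telescope : (1 + t (Fin.last (n + 1))) * (1 - t (Fin.last (n + 1)) + t (Fin.last n).castSucc)
        = 1 + t (Fin.last n).castSucc := by
      have h := hrel (Fin.last n)
      rw [Fin.succ_last] at h
      linear_combination -h
    rw [Fin.prod_univ_castSucc, Fin.succ_last, mul_left_comm, telescope, mul_comm]
    simpa only [Function.comp_apply, Fin.succ_castSucc] using ih

open MvPolynomial in
/-- In `ℤ[t_0,…,t_i]/(t_0, t_a² - t_a t_{a-1})` (so that `t_0 = 0`),
`(1 + t_i) · ∏_{a=1}^{i} (1 - t_a + t_{a-1}) = 1`. -/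
theorem stmt_13 (i : ℕ)
    (I : Ideal (MvPolynomial (Fin (i + 1)) ℤ))
    (hI : I = Ideal.span ({X 0} ∪
      Set.range fun a : Fin i => (X a.succ) ^ 2 - X a.succ * X a.castSucc))
    (t : Fin (i + 1) → MvPolynomial (Fin (i + 1)) ℤ ⧸ I)
    (ht : ∀ a, t a = Ideal.Quotient.mk I (X a)) :
    (1 + t (Fin.last i)) * ∏ a : Fin i, (1 - t a.succ + t a.castSucc) = 1 := by
  have h0 : t 0 = 0 := by
    rw [ht, Ideal.Quotient.eq_zero_iff_mem, hI]
    exact Ideal.subset_span (Or.inl rfl)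
  refine one_add_last_mul_prod_one_sub_succ_add_castSucc t h0 fun a => ?_
  have hrel : Ideal.Quotient.mk I ((X a.succ) ^ 2 - X a.succ * X a.castSucc) = 0 := by
    rw [Ideal.Quotient.eq_zero_iff_mem, hI]
    exact Ideal.subset_span (Or.inr ⟨a, rfl⟩)
  simpa only [ht, map_sub, map_mul, map_pow, sub_eq_zero, sq] using hrel
end
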